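/- Let 0 < s < t, and let Z₁ and Y be independent real random variables with Z₁ distributed as a centered Gaussian with variance s and Y as a centered Gaussian with variance t−s (equivalently, (Z₁, Z₁+Y) has the law of a Brownian motion at times s and t). Then for all x, y ∈ ℝ, P(Z₁ ≤ x, Z₁ + Y ≤ y) = ψ(s,t; Φ(x/√s), Φ(y/√t)); that is, ψ(s,t;·,·) is the copula of the bivariate distribution of the Brownian motion at times s < t. -/

import Mathlib

/-!
By independence the law of `(Z, Y)` is `N(0,s) ⊗ N(0,t-s)`, and integrating out `Y` gives
`P(Z ≤ x, Z + Y ≤ y) = ∫_{z ≤ x} Φ((y - z)/√(t-s)) dN(0,s)(z)`. Writing `z = √s u` with `u`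
standard normal and then substituting `w = Φ(u)`, whose Jacobian is the density `φ(u)`, turns this
into `∫₀^{Φ(x/√s)} Φ((y - √s Φ⁻¹(w))/√(t-s)) dw`, the defining integral of `ψ` at `v = Φ(y/√t)`.
-/

open MeasureTheory Set Filter

/-- Density of the standard normal distribution (φ). -/
noncomputable def stdNormalPDF (x : ℝ) : ℝ := (Real.sqrt (2 * Real.pi))⁻¹ * Real.exp (-x ^ 2 / 2)

/-- Cumulative distribution function of the standard normal distribution (Φ). -/
noncomputable def stdNormalCDF (x : ℝ) : ℝ := ∫ t in Set.Iic x, stdNormalPDF t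

/-- The standard normal quantile function (Φ⁻¹), the inverse of Φ on (0,1). -/
noncomputable def stdNormalCDFInv : ℝ → ℝ := Function.invFun stdNormalCDF

/-- The integrand of the Brownian-copula kernel; the `if` branches encode the
conventions Φ⁻¹(0) = -∞ (so Φ(·) = 0) and Φ⁻¹(1) = +∞ (so Φ(·) = 1). -/
noncomputable def psiIntegrand (s t v w : ℝ) : ℝ :=
  if v ≤ 0 then 0
  else if 1 ≤ v then 1
  else stdNormalCDF ((Real.sqrt (max s t) * stdNormalCDFInv v -
      Real.sqrt (min s t) * stdNormalCDFInv w) / Real.sqrt |t - s|)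

/-- The Brownian-copula kernel ψ(s,t;u,v). -/
noncomputable def psi (s t u v : ℝ) : ℝ :=
  if 0 < |t - s| then ∫ w in (0:ℝ)..u, psiIntegrand s t v w
  else if 0 < t then min u v
  else u * v

open ProbabilityTheory

lemma stdNormalPDF_eq_gaussianPDFReal : stdNormalPDF = gaussianPDFReal 0 1 := by
  ext x
  simp [stdNormalPDF, gaussianPDFReal]

lemma stdNormalPDF_pos (x : ℝ) : 0 < stdNormalPDF x := by
  rw [stdNormalPDF_eq_gaussianPDFReal]
  exact gaussianPDFReal_pos 0 1 x one_ne_zero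

lemma integrable_stdNormalPDF : Integrable stdNormalPDF := by
  rw [stdNormalPDF_eq_gaussianPDFReal]
  exact integrable_gaussianPDFReal 0 1

lemma continuous_stdNormalPDF : Continuous stdNormalPDF := by
  unfold stdNormalPDF
  fun_prop

lemma stdNormalCDF_eq_cdf : stdNormalCDF = cdf (gaussianReal 0 1) := by
  ext x
  rw [cdf_eq_real, measureReal_def, gaussianReal_apply_eq_integral 0 one_ne_zero,
    ENNReal.toReal_ofReal (setIntegral_nonneg measurableSet_Iic
      fun y _ => gaussianPDFReal_nonneg 0 1 y), stdNormalCDF, stdNormalPDF_eq_gaussianPDFReal]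

lemma stdNormalCDF_sub_stdNormalCDF (a b : ℝ) :
    stdNormalCDF b - stdNormalCDF a = ∫ x in a..b, stdNormalPDF x :=
  intervalIntegral.integral_Iic_sub_Iic integrable_stdNormalPDF.integrableOn
    integrable_stdNormalPDF.integrableOn

lemma stdNormalCDF_strictMono : StrictMono stdNormalCDF := fun a b hab => by
  have hpos : 0 < ∫ x in a..b, stdNormalPDF x :=
    intervalIntegral.intervalIntegral_pos_of_pos_on
      integrable_stdNormalPDF.intervalIntegrable (fun x _ => stdNormalPDF_pos x) hab
  linarith [stdNormalCDF_sub_stdNormalCDF a b]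

lemma stdNormalCDF_pos (b : ℝ) : 0 < stdNormalCDF b :=
  (stdNormalCDF_eq_cdf ▸ cdf_nonneg _ (b - 1)).trans_lt (stdNormalCDF_strictMono (sub_one_lt b))

lemma stdNormalCDF_lt_one (b : ℝ) : stdNormalCDF b < 1 :=
  (stdNormalCDF_strictMono (lt_add_one b)).trans_le (stdNormalCDF_eq_cdf ▸ cdf_le_one _ (b + 1))

lemma hasDerivAt_stdNormalCDF (b : ℝ) : HasDerivAt stdNormalCDF (stdNormalPDF b) b := by
  have hD : HasDerivAt (fun z => stdNormalCDF 0 + ∫ x in (0 : ℝ)..z, stdNormalPDF x)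
      (stdNormalPDF b) b :=
    (intervalIntegral.integral_hasDerivAt_right integrable_stdNormalPDF.intervalIntegrable
      continuous_stdNormalPDF.aestronglyMeasurable.stronglyMeasurableAtFilter
      continuous_stdNormalPDF.continuousAt).const_add _
  refine hD.congr_of_eventuallyEq (Eventually.of_forall fun z => ?_)
  linarith [stdNormalCDF_sub_stdNormalCDF 0 z]

lemma continuous_stdNormalCDF : Continuous stdNormalCDF :=
  continuous_iff_continuousAt.mpr fun b => (hasDerivAt_stdNormalCDF b).continuousAt

lemma stdNormalCDFInv_stdNormalCDF (b : ℝ) : stdNormalCDFInv (stdNormalCDF b) = b :=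
  Function.leftInverse_invFun stdNormalCDF_strictMono.injective b

lemma stdNormalCDF_image_Iic (c : ℝ) : stdNormalCDF '' Iic c = Ioc 0 (stdNormalCDF c) := by
  refine Subset.antisymm ?_ ?_
  · rintro _ ⟨u, hu, rfl⟩
    exact ⟨stdNormalCDF_pos u, stdNormalCDF_strictMono.monotone hu⟩
  rintro w ⟨hw0, hwc⟩
  have hbot : Tendsto stdNormalCDF atBot (nhds 0) :=
    stdNormalCDF_eq_cdf ▸ tendsto_cdf_atBot (gaussianReal 0 1)
  obtain ⟨a, haw, hac⟩ :=
    ((hbot.eventually_lt_const hw0).and (eventually_le_atBot c)).exists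
  exact image_mono Icc_subset_Iic_self
    (intermediate_value_Icc hac continuous_stdNormalCDF.continuousOn ⟨haw.le, hwc⟩)

lemma gaussianReal_map_sqrt_mul {v : ℝ} (hv : 0 ≤ v) :
    (gaussianReal 0 1).map (Real.sqrt v * ·) = gaussianReal 0 v.toNNReal := by
  rw [gaussianReal_map_const_mul]
  congr 1
  · ring
  · ext
    simp [Real.sq_sqrt hv, hv]

lemma measureReal_gaussianReal_Iic {v : ℝ} (hv : 0 < v) (a : ℝ) :
    (gaussianReal 0 v.toNNReal).real (Iic a) = stdNormalCDF (a / Real.sqrt v) := by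
  rw [← gaussianReal_map_sqrt_mul hv.le, map_measureReal_apply (measurable_const_mul _)
    measurableSet_Iic, preimage_const_mul_Iic₀ a (Real.sqrt_pos.mpr hv), stdNormalCDF_eq_cdf,
    cdf_eq_real]

lemma setIntegral_gaussianReal_Iic {v : ℝ} (hv : 0 < v) (f : ℝ → ℝ) (x : ℝ) :
    ∫ z in Iic x, f z ∂gaussianReal 0 v.toNNReal =
      ∫ u in Iic (x / Real.sqrt v), f (Real.sqrt v * u) ∂gaussianReal 0 1 := by
  have hsv : 0 < Real.sqrt v := Real.sqrt_pos.mpr hv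
  rw [← gaussianReal_map_sqrt_mul hv.le, (measurableEmbedding_mulLeft₀ hsv.ne').setIntegral_map,
    preimage_const_mul_Iic₀ x hsv]

lemma setIntegral_gaussianReal_eq_setIntegral_mul (μ : ℝ) {v : NNReal} (hv : v ≠ 0)
    (f : ℝ → ℝ) {S : Set ℝ} (hS : MeasurableSet S) :
    ∫ x in S, f x ∂gaussianReal μ v = ∫ x in S, gaussianPDFReal μ v x * f x := by
  rw [gaussianReal_of_var_ne_zero μ hv, setIntegral_withDensity_eq_setIntegral_toReal_smul
    (measurable_gaussianPDF μ v) (ae_of_all _ fun _ => gaussianPDF_lt_top) f hS]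
  simp only [toReal_gaussianPDF, smul_eq_mul]

lemma setIntegral_Iic_stdNormalPDF_mul (g : ℝ → ℝ) (c : ℝ) :
    ∫ u in Iic c, stdNormalPDF u * g u =
      ∫ w in Ioc 0 (stdNormalCDF c), g (stdNormalCDFInv w) := by
  rw [← stdNormalCDF_image_Iic, integral_image_eq_integral_abs_deriv_smul measurableSet_Iic
    (fun u _ => (hasDerivAt_stdNormalCDF u).hasDerivWithinAt)
    stdNormalCDF_strictMono.injective.injOn]
  refine setIntegral_congr_fun measurableSet_Iic fun u _ => ?_
  rw [stdNormalCDFInv_stdNormalCDF, smul_eq_mul, abs_of_pos (stdNormalPDF_pos u)]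

lemma psi_stdNormalCDF {s t : ℝ} (hst : s < t) (a b : ℝ) :
    psi s t (stdNormalCDF a) (stdNormalCDF b) = ∫ w in Ioc 0 (stdNormalCDF a),
      stdNormalCDF ((Real.sqrt t * b - Real.sqrt s * stdNormalCDFInv w) / Real.sqrt (t - s)) := by
  have hts : 0 < t - s := sub_pos.mpr hst
  have habs : |t - s| = t - s := abs_of_pos hts
  rw [psi, if_pos (by rwa [habs]),
    intervalIntegral.integral_of_le (stdNormalCDF_pos a).le]
  refine setIntegral_congr_fun measurableSet_Ioc fun w _ => ?_
  rw [psiIntegrand, if_neg (stdNormalCDF_pos b).not_ge, if_neg (stdNormalCDF_lt_one b).not_ge,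
    max_eq_right hst.le, min_eq_left hst.le, habs, stdNormalCDFInv_stdNormalCDF]

lemma measurableSet_setOf_fst_le_and_add_le {x y : ℝ} :
    MeasurableSet {p : ℝ × ℝ | p.1 ≤ x ∧ p.1 + p.2 ≤ y} :=
  (measurableSet_le measurable_fst measurable_const).inter
    (measurableSet_le (measurable_fst.add measurable_snd) measurable_const)

lemma measureReal_prod_setOf_fst_le_and_add_le (μ ν : Measure ℝ) [SFinite μ]
    [IsFiniteMeasure ν] (x y : ℝ) :
    (μ.prod ν).real {p : ℝ × ℝ | p.1 ≤ x ∧ p.1 + p.2 ≤ y} =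
      ∫ z in Iic x, ν.real (Iic (y - z)) ∂μ := by
  have hslice : ∀ z, ν (Prod.mk z ⁻¹' {p : ℝ × ℝ | p.1 ≤ x ∧ p.1 + p.2 ≤ y}) =
      (Iic x).indicator (fun z => ν (Iic (y - z))) z := by
    intro z
    by_cases hz : z ≤ x
    · rw [indicator_of_mem (mem_Iic.mpr hz)]
      congr 1
      ext w
      change z ≤ x ∧ z + w ≤ y ↔ w ≤ y - z
      constructor
      · rintro ⟨-, h⟩
        linarith
      · intro h
        exact ⟨hz, by linarith⟩
    · rw [indicator_of_notMem (fun h => hz (mem_Iic.mp h))]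
      simp [hz]
  have hanti : Antitone fun z => ν.real (Iic (y - z)) := fun a b hab =>
    measureReal_mono (Iic_subset_Iic.mpr (by linarith))
  rw [integral_eq_lintegral_of_nonneg_ae (ae_of_all _ fun z => measureReal_nonneg)
    hanti.measurable.aestronglyMeasurable, measureReal_def,
    Measure.prod_apply measurableSet_setOf_fst_le_and_add_le]
  simp_rw [hslice, ofReal_measureReal (measure_ne_top ν _)]
  rw [lintegral_indicator measurableSet_Iic]

/-- ψ(s,t;·,·) is the copula of the bivariate distribution of Brownian motion at times
0 < s < t: if Z ~ N(0,s) and Y ~ N(0,t−s) are independent, then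
P(Z ≤ x, Z + Y ≤ y) = ψ(s,t; Φ(x/√s), Φ(y/√t)). -/
theorem psi_is_copula_of_brownian_pair
    {Ω : Type*} [MeasurableSpace Ω] (P : Measure Ω) [IsProbabilityMeasure P]
    (s t : ℝ) (hs : 0 < s) (hst : s < t)
    (Z Y : Ω → ℝ) (hZm : Measurable Z) (hYm : Measurable Y)
    (hZ : P.map Z = gaussianReal 0 s.toNNReal)
    (hY : P.map Y = gaussianReal 0 (t - s).toNNReal)
    (hindep : IndepFun Z Y P) (x y : ℝ) :
    (P {ω | Z ω ≤ x ∧ Z ω + Y ω ≤ y}).toReal =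
      psi s t (stdNormalCDF (x / Real.sqrt s)) (stdNormalCDF (y / Real.sqrt t)) := by
  have hlaw : P.map (fun ω => (Z ω, Y ω)) = (P.map Z).prod (P.map Y) :=
    (indepFun_iff_map_prod_eq_prod_map_map hZm.aemeasurable hYm.aemeasurable).mp hindep
  have hy : Real.sqrt t * (y / Real.sqrt t) = y :=
    mul_div_cancel₀ y (Real.sqrt_pos.mpr (hs.trans hst)).ne'
  calc (P {ω | Z ω ≤ x ∧ Z ω + Y ω ≤ y}).toReal
      = ((P.map Z).prod (P.map Y)).real {p : ℝ × ℝ | p.1 ≤ x ∧ p.1 + p.2 ≤ y} := by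
        rw [← hlaw,
          map_measureReal_apply (hZm.prodMk hYm) measurableSet_setOf_fst_le_and_add_le]
        rfl
    _ = ∫ z in Iic x, stdNormalCDF ((y - z) / Real.sqrt (t - s))
          ∂gaussianReal 0 s.toNNReal := by
        rw [measureReal_prod_setOf_fst_le_and_add_le, hZ, hY]
        simp_rw [measureReal_gaussianReal_Iic (sub_pos.mpr hst)]
    _ = ∫ u in Iic (x / Real.sqrt s),
          stdNormalPDF u * stdNormalCDF ((y - Real.sqrt s * u) / Real.sqrt (t - s)) := by
        rw [setIntegral_gaussianReal_Iic hs, setIntegral_gaussianReal_eq_setIntegral_mul 0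
          one_ne_zero _ measurableSet_Iic, stdNormalPDF_eq_gaussianPDFReal]
    _ = _ := by
        rw [setIntegral_Iic_stdNormalPDF_mul, psi_stdNormalCDF hst, hy]
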